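/- Fix d ≥ 1. Let e, σ : ℝ → ℝ and let V₀ = (ρ₀, v₀, p₀) with ρ₀ > 0, p₀ > 0, v₀ ∈ ℝ^d, ‖v₀‖ < 1; put θ₀ = p₀/ρ₀ and assume e and σ are differentiable at θ₀ with σ′(θ₀) = e′(θ₀)/θ₀. On primitive states V = (ρ, v, p) with ρ > 0, p > 0, ‖v‖ < 1, define θ = p/ρ, γ = 1/√(1−‖v‖²), h = 1 + e(θ) + θ, S = −ln ρ + σ(θ), the conservative-variable map U(V) = (ργ, ρhγ²v, ρhγ² − p) ∈ ℝ^{d+2}, and the entropy η(V) = −ργS. Then the Fréchet derivatives at V₀ satisfy Dη(V₀)[u] = ⟨W(V₀), DU(V₀)[u]⟩ for every tangent vector u ∈ ℝ^{d+2}, where W(V) = θ⁻¹(h − θS, γv₁,…,γv_d, −γ); that is, W is the gradient of the entropy η with respect to the conservative variables U. -/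

import Mathlib

/-!
With `m = ρhγ²`, the identity `γ²(1 − ‖v‖²) = 1` collapses the pairing of
`W = θ⁻¹(h − θS, γv, −γ)` with `dU = (d(ργ), d(m v), dm − dp)` to
`⟨W, dU⟩ = −S d(ργ) + θ⁻¹γ (dp − ρ dh)`. Differentiating `p = ρθ` and `h = 1 + e(θ) + θ` gives
`dp − ρ dh = θ dρ − ρ e'(θ) dθ`, which is `−ρθ dS` because `σ'(θ) = e'(θ)/θ`. Hence
`⟨W, dU⟩ = −S d(ργ) − ργ dS = dη`.
-/

noncomputable section

/-- The primitive state space `(ρ, v, p) ∈ ℝ × ℝ^d × ℝ ≅ ℝ^{d+2}`. -/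
abbrev Prim (d : ℕ) := ℝ × (Fin d → ℝ) × ℝ

/-- `θ = p/ρ`. -/
def thetaFun {d : ℕ} (V : Prim d) : ℝ := V.2.2 / V.1

/-- Lorentz factor `γ = 1/√(1 − ‖v‖²)`. -/
def gammaFun {d : ℕ} (V : Prim d) : ℝ := 1 / Real.sqrt (1 - ∑ j, V.2.1 j ^ 2)

theorem gammaFun_sq_mul_one_sub {d : ℕ} {V : Prim d} (hv : ∑ j, V.2.1 j ^ 2 < 1) :
    gammaFun V ^ 2 * (1 - ∑ j, V.2.1 j ^ 2) = 1 := by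
  rw [gammaFun, div_pow, Real.sq_sqrt (by linarith)]
  field_simp [show 1 - ∑ j, V.2.1 j ^ 2 ≠ 0 by linarith]

theorem exists_hasFDerivAt_thetaFun {d : ℕ} {V : Prim d} (hρ : V.1 ≠ 0) :
    ∃ θ' : Prim d →L[ℝ] ℝ, HasFDerivAt thetaFun θ' V ∧
      ∀ u, u.2.2 = V.1 * θ' u + thetaFun V * u.1 := by
  have hp : HasFDerivAt (fun V : Prim d => V.2.2) _ V :=
    (hasFDerivAt_snd (𝕜 := ℝ) (p := V)).snd
  have h := hp.mul ((hasDerivAt_inv hρ).comp_hasFDerivAt V hasFDerivAt_fst)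
  refine ⟨_, h.congr_of_eventuallyEq (.of_forall fun V => div_eq_mul_inv _ _), fun u => ?_⟩
  simp only [thetaFun, neg_smul, smul_neg, Function.comp_apply, add_apply, neg_apply, smul_apply,
    smul_eq_mul, ContinuousLinearMap.comp_apply, ContinuousLinearMap.coe_fst',
    ContinuousLinearMap.coe_snd']
  field_simp
  ring

theorem exists_hasFDerivAt_gammaFun {d : ℕ} {V : Prim d} (hv : ∑ j, V.2.1 j ^ 2 < 1) :
    ∃ γ' : Prim d →L[ℝ] ℝ, HasFDerivAt gammaFun γ' V ∧
      ∀ u, γ' u = gammaFun V ^ 3 * ∑ j, V.2.1 j * u.2.1 j := by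
  have hv' : ∀ j, HasFDerivAt (fun V : Prim d => V.2.1 j) _ V := fun j =>
    hasFDerivAt_pi'.1 (hasFDerivAt_snd (𝕜 := ℝ) (p := V)).fst j
  have hq : HasFDerivAt (fun V : Prim d => 1 - ∑ j, V.2.1 j ^ 2) _ V :=
    (hasFDerivAt_const 1 V).sub (HasFDerivAt.fun_sum fun j _ => (hv' j).pow 2)
  have hs : 0 < √(1 - ∑ j, V.2.1 j ^ 2) := Real.sqrt_pos.2 (by linarith)
  have h := (hasDerivAt_inv hs.ne').comp_hasFDerivAt V (hq.sqrt (by linarith))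
  refine ⟨_, h.congr_of_eventuallyEq (.of_forall fun V => one_div _), fun u => ?_⟩
  simp only [gammaFun, one_div, mul_inv_rev, inv_pow, Nat.add_one_sub_one, pow_one, nsmul_eq_mul,
    Nat.cast_ofNat, zero_sub, smul_neg, neg_smul, neg_neg, smul_apply, sum_apply, smul_eq_mul,
    ContinuousLinearMap.comp_apply, ContinuousLinearMap.coe_snd', ContinuousLinearMap.coe_fst',
    ContinuousLinearMap.proj_apply, mul_assoc, ← Finset.mul_sum, ne_eq, OfNat.ofNat_ne_zero,
    not_false_eq_true, inv_mul_cancel_left₀]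
  field_simp

/-- `dX` is the differential of `X` evaluated at a fixed tangent vector and `e'` stands for
`e'(θ)`; the entropy differential `dS = e'/θ dθ − dρ/ρ` is already inlined in `hdη`. -/
theorem entropy_differential_eq_pairing {ι : Type*} [Fintype ι]
    {ρ θ γ e' h S dρ dp dθ dγ dη dU₁ dU₃ : ℝ} {v dv dU₂ : ι → ℝ} (hρ : ρ ≠ 0) (hθ : θ ≠ 0)
    (hγ : γ ^ 2 * (1 - ∑ i, v i ^ 2) = 1)
    (hdγ : dγ = γ ^ 3 * ∑ i, v i * dv i) (hdp : dp = ρ * dθ + θ * dρ)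
    (hdη : dη = -((dρ * γ + ρ * dγ) * S + ρ * γ * (e' / θ * dθ - dρ / ρ)))
    (hdU₁ : dU₁ = dρ * γ + ρ * dγ)
    (hdU₂ : ∀ i, dU₂ i = (dρ * h * γ ^ 2 + ρ * (1 + e') * dθ * γ ^ 2 + 2 * ρ * h * γ * dγ) * v i
      + ρ * h * γ ^ 2 * dv i)
    (hdU₃ : dU₃ = dρ * h * γ ^ 2 + ρ * (1 + e') * dθ * γ ^ 2 + 2 * ρ * h * γ * dγ - dp) :
    dη = θ⁻¹ * (h - θ * S) * dU₁ + ∑ i, θ⁻¹ * (γ * v i) * dU₂ i + θ⁻¹ * -γ * dU₃ := by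
  generalize hdm : dρ * h * γ ^ 2 + ρ * (1 + e') * dθ * γ ^ 2 + 2 * ρ * h * γ * dγ = dm
    at hdU₂ hdU₃
  have hsum : ∑ i, θ⁻¹ * (γ * v i) * dU₂ i =
      θ⁻¹ * γ * (dm * ∑ i, v i ^ 2 + ρ * h * γ ^ 2 * ∑ i, v i * dv i) := by
    simp only [hdU₂, Finset.mul_sum, ← Finset.sum_add_distrib]
    exact Finset.sum_congr rfl fun i _ => by ring
  rw [hsum, hdη, hdU₁, hdU₃, hdp, ← hdm, hdγ]
  field_simp
  linear_combination (γ * (dρ * h + ρ * (1 + e') * dθ) + 2 * γ ^ 3 * ρ * h * ∑ i, v i * dv i) * hγ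

theorem stmt1 (d : ℕ) (e σ : ℝ → ℝ) (V₀ : Prim d)
    (hρ : 0 < V₀.1) (hp : 0 < V₀.2.2) (hv : ∑ j, V₀.2.1 j ^ 2 < 1)
    (he : DifferentiableAt ℝ e (thetaFun V₀))
    (hσ : HasDerivAt σ (deriv e (thetaFun V₀) / thetaFun V₀) (thetaFun V₀)) :
    let hFun : Prim d → ℝ := fun V => 1 + e (thetaFun V) + thetaFun V
    let SFun : Prim d → ℝ := fun V => -Real.log V.1 + σ (thetaFun V)
    let Umap : Prim d → ℝ × (Fin d → ℝ) × ℝ := fun V =>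
      (V.1 * gammaFun V,
       fun j => V.1 * hFun V * gammaFun V ^ 2 * V.2.1 j,
       V.1 * hFun V * gammaFun V ^ 2 - V.2.2)
    let η : Prim d → ℝ := fun V => -(V.1 * gammaFun V * SFun V)
    let W₁ : ℝ := (thetaFun V₀)⁻¹ * (hFun V₀ - thetaFun V₀ * SFun V₀)
    let Wm : Fin d → ℝ := fun j => (thetaFun V₀)⁻¹ * (gammaFun V₀ * V₀.2.1 j)
    let Wl : ℝ := (thetaFun V₀)⁻¹ * (-gammaFun V₀)
    DifferentiableAt ℝ η V₀ ∧ DifferentiableAt ℝ Umap V₀ ∧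
      ∀ u : Prim d,
        fderiv ℝ η V₀ u =
          W₁ * (fderiv ℝ Umap V₀ u).1 + (∑ j, Wm j * (fderiv ℝ Umap V₀ u).2.1 j)
            + Wl * (fderiv ℝ Umap V₀ u).2.2 := by
  intro hFun SFun Umap η W₁ Wm Wl
  obtain ⟨θ', hθ, hθ'⟩ := exists_hasFDerivAt_thetaFun hρ.ne'
  obtain ⟨γ', hγ, hγ'⟩ := exists_hasFDerivAt_gammaFun hv
  have hρ' : HasFDerivAt (fun V : Prim d => V.1) _ V₀ := hasFDerivAt_fst (𝕜 := ℝ)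
  have hp' : HasFDerivAt (fun V : Prim d => V.2.2) _ V₀ :=
    (hasFDerivAt_snd (𝕜 := ℝ) (p := V₀)).snd
  have hv' : ∀ j, HasFDerivAt (fun V : Prim d => V.2.1 j) _ V₀ := fun j =>
    hasFDerivAt_pi'.1 (hasFDerivAt_snd (𝕜 := ℝ) (p := V₀)).fst j
  have hh : HasFDerivAt hFun _ V₀ :=
    ((hasFDerivAt_const 1 V₀).add (he.hasDerivAt.comp_hasFDerivAt V₀ hθ)).add hθ
  have hS : HasFDerivAt SFun _ V₀ := (hρ'.log hρ.ne').neg.add (hσ.comp_hasFDerivAt V₀ hθ)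
  have hη : HasFDerivAt η _ V₀ := ((hρ'.mul hγ).mul hS).neg
  have hm : HasFDerivAt (fun V => V.1 * hFun V * gammaFun V ^ 2) _ V₀ :=
    (hρ'.mul hh).mul (hγ.pow 2)
  have hU : HasFDerivAt Umap _ V₀ :=
    (hρ'.mul hγ).prodMk ((hasFDerivAt_pi.2 fun j => hm.mul (hv' j)).prodMk (hm.sub hp'))
  refine ⟨hη.differentiableAt, hU.differentiableAt, fun u => ?_⟩
  rw [hη.fderiv, hU.fderiv]
  simp only [Pi.mul_apply, smul_add, smul_neg, neg_add_rev, neg_neg, add_apply, neg_apply,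
    smul_apply, smul_eq_mul, Nat.add_one_sub_one, pow_one, nsmul_eq_mul, Nat.cast_ofNat, zero_add,
    sub_apply, ContinuousLinearMap.prod_apply, ContinuousLinearMap.coe_pi',
    ContinuousLinearMap.comp_apply, ContinuousLinearMap.coe_fst', ContinuousLinearMap.coe_snd',
    ContinuousLinearMap.proj_apply]
  refine entropy_differential_eq_pairing (e' := deriv e (thetaFun V₀)) hρ.ne' (div_pos hp hρ).ne'
    (gammaFun_sq_mul_one_sub hv) (hγ' u) (hθ' u) ?_ ?_ (fun j => ?_) ?_ <;> ring
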